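/- Let G be a k-regular finite simple connected graph with k ≥ 4 that is λ''-connected and λ''-optimal. Then G is super-λ' if and only if the girth of G is at least 4 or k ≥ 5. -/

import Mathlib

open SimpleGraph

variable {V : Type*}

/-- The degree of a vertex, as the cardinality of its neighbor set. -/
noncomputable def degN (G : SimpleGraph V) (v : V) : ℕ := (G.neighborSet v).ncard

/-- The minimum degree `δ(G)`. -/
noncomputable def minDeg (G : SimpleGraph V) : ℕ := sInf {k | ∃ v, degN G v = k}

/-- `d_G(X)`: the number of edges of `G` with exactly one endpoint in `X`. -/
noncomputable def dOut (G : SimpleGraph V) (X : Set V) : ℕ :=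
  {e ∈ G.edgeSet | ∃ x ∈ X, ∃ y ∈ Xᶜ, e = s(x, y)}.ncard

/-- `F` is an `h`-extra edge-cut of `G`: a set of edges of `G` whose removal disconnects `G`
and such that every connected component of `G - F` has more than `h` vertices. -/
def IsExtraEdgeCut (G : SimpleGraph V) (h : ℕ) (F : Set (Sym2 V)) : Prop :=
  F ⊆ G.edgeSet ∧ ¬(G.deleteEdges F).Connected ∧
    ∀ c : (G.deleteEdges F).ConnectedComponent, h < c.supp.ncard

/-- `G` is `λ^(h)`-connected: an `h`-extra edge-cut exists. -/
def LambdaConn (G : SimpleGraph V) (h : ℕ) : Prop := ∃ F, IsExtraEdgeCut G h F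

/-- The `h`-extra edge-connectivity `λ^(h)(G)`: the minimum cardinality of an
`h`-extra edge-cut. -/
noncomputable def lambdaH (G : SimpleGraph V) (h : ℕ) : ℕ :=
  sInf {k | ∃ F, IsExtraEdgeCut G h F ∧ F.ncard = k}

/-- `ξ_h(G)`: the minimum of `d_G(X)` over vertex sets `X` of size `h + 1` inducing a
connected subgraph. -/
noncomputable def xiH (G : SimpleGraph V) (h : ℕ) : ℕ :=
  sInf {k | ∃ X : Set V, X.ncard = h + 1 ∧ (G.induce X).Connected ∧ dOut G X = k}

/-- `G` is super-`λ^(h)`: it is connected, `λ^(h)`-connected, `λ^(h)`-optimal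
(`λ^(h)(G) = ξ_h(G)`), and every minimum `h`-extra edge-cut leaves a component with
exactly `h + 1` vertices. -/
def SuperLambda (G : SimpleGraph V) (h : ℕ) : Prop :=
  G.Connected ∧ LambdaConn G h ∧ lambdaH G h = xiH G h ∧
    ∀ F : Set (Sym2 V), IsExtraEdgeCut G h F → F.ncard = lambdaH G h →
      ∃ c : (G.deleteEdges F).ConnectedComponent, c.supp.ncard = h + 1

/-- The persistence `ρ^(h)(G)`: the largest `m` such that `G - F` is super-`λ^(h)` for
every set `F` of at most `m` edges of `G`. -/
noncomputable def rhoH (G : SimpleGraph V) (h : ℕ) : ℕ :=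
  sSup {m : ℕ | ∀ F : Set (Sym2 V), F ⊆ G.edgeSet → F.ncard ≤ m →
    SuperLambda (G.deleteEdges F) h}

/-- `ξ(G)`: the minimum edge-degree `deg x + deg y - 2` over the edges `xy` of `G`. -/
noncomputable def xiEdge (G : SimpleGraph V) : ℕ :=
  sInf {k | ∃ x y, G.Adj x y ∧ degN G x + degN G y - 2 = k}

/-- `η(G)`: the number of edges of `G` whose edge-degree equals `ξ(G)`. -/
noncomputable def eta (G : SimpleGraph V) : ℕ :=
  {e ∈ G.edgeSet | ∃ x y, e = s(x, y) ∧ degN G x + degN G y - 2 = xiEdge G}.ncard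

/-!
In a `k`-regular graph, `d_G(X) = ∑_{v ∈ X} (k - |N(v) ∩ X|)`, so an edge has `d = 2k - 2`, a
triangle `d = 3k - 6`, and every other set of three vertices `d ≥ 3k - 4`. The boundary of an
edge is a 1-extra edge-cut, and a minimum 1-extra edge-cut without a 2-vertex component is a
2-extra edge-cut; with `λ'' = ξ₂ ≥ 3k - 6 ≥ 2k - 2` this gives `λ' = ξ₁ = 2k - 2`, and `G` is
super-`λ'` exactly when `λ' < λ''`, i.e. when `ξ₂ > 2k - 2`. That fails only for `k = 4` with a
triangle.
-/

section ExtraConnectivity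

variable {G : SimpleGraph V}

def edgeBoundary (G : SimpleGraph V) (X : Set V) : Set (Sym2 V) :=
  {e ∈ G.edgeSet | ∃ x ∈ X, ∃ y ∈ Xᶜ, e = s(x, y)}

lemma dOut_eq_ncard_edgeBoundary (X : Set V) : dOut G X = (edgeBoundary G X).ncard := rfl

lemma mk_mem_edgeBoundary_iff {X : Set V} {u v : V} :
    s(u, v) ∈ edgeBoundary G X ↔ G.Adj u v ∧ (u ∈ X ∧ v ∉ X ∨ v ∈ X ∧ u ∉ X) := by
  simp only [edgeBoundary, Set.mem_ofPred_eq, mem_edgeSet, Set.mem_compl_iff, Sym2.eq_iff]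
  constructor
  · rintro ⟨h, x, hx, y, hy, (⟨rfl, rfl⟩ | ⟨rfl, rfl⟩)⟩ <;> tauto
  · rintro ⟨h, ⟨hu, hv⟩ | ⟨hv, hu⟩⟩
    · exact ⟨h, u, hu, v, hv, Or.inl ⟨rfl, rfl⟩⟩
    · exact ⟨h, v, hv, u, hu, Or.inr ⟨rfl, rfl⟩⟩

lemma edgeBoundary_eq_biUnion (X : Set V) :
    edgeBoundary G X = ⋃ v ∈ X, (fun w => s(v, w)) '' (G.neighborSet v \ X) := by
  ext e
  induction e using Sym2.ind with
  | _ u v =>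
    simp only [mk_mem_edgeBoundary_iff, Set.mem_iUnion, Set.mem_image, Set.mem_sdiff,
      mem_neighborSet, Sym2.eq_iff, exists_prop]
    constructor
    · rintro ⟨h, ⟨hu, hv⟩ | ⟨hv, hu⟩⟩
      · exact ⟨u, hu, v, ⟨h, hv⟩, Or.inl ⟨rfl, rfl⟩⟩
      · exact ⟨v, hv, u, ⟨h.symm, hu⟩, Or.inr ⟨rfl, rfl⟩⟩
    · rintro ⟨x, hx, y, ⟨h, hy⟩, ⟨rfl, rfl⟩ | ⟨rfl, rfl⟩⟩
      · exact ⟨h, Or.inl ⟨hx, hy⟩⟩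
      · exact ⟨h.symm, Or.inr ⟨hx, hy⟩⟩

theorem dOut_eq_sum [Finite V] (X : Finset V) :
    dOut G X = ∑ v ∈ X, (G.neighborSet v \ X).ncard := by
  have hdisj : (X : Set V).PairwiseDisjoint
      fun v => (fun w => s(v, w)) '' (G.neighborSet v \ X) := by
    rintro u hu v - huv
    refine Set.disjoint_left.mpr ?_
    rintro _ ⟨a, -, rfl⟩ ⟨b, ⟨-, hb⟩, hab⟩
    rcases Sym2.eq_iff.mp hab with ⟨rfl, -⟩ | ⟨rfl, rfl⟩
    · exact huv rfl
    · exact hb hu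
  rw [dOut_eq_ncard_edgeBoundary, edgeBoundary_eq_biUnion,
    (Set.toFinite _).ncard_biUnion (fun _ _ => Set.toFinite _) hdisj, finsum_mem_coe_finset]
  exact Finset.sum_congr rfl fun v _ =>
    Set.ncard_image_of_injective _ fun _ _ h => Sym2.congr_right.mp h

lemma ncard_neighborSet_sdiff [Finite V] (v : V) (X : Set V) :
    (G.neighborSet v \ X).ncard = degN G v - (G.neighborSet v ∩ X).ncard := by
  rw [degN, ← Set.ncard_inter_add_ncard_sdiff_eq_ncard (G.neighborSet v) X (Set.toFinite _)]
  omega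

lemma neighborSet_inter_subset_sdiff (v : V) (X : Set V) :
    G.neighborSet v ∩ X ⊆ X \ {v} :=
  fun _ ⟨hw, hX⟩ => ⟨hX, fun h => G.irrefl (h ▸ hw)⟩

section Counting

variable [Finite V] {X : Finset V} {v w : V}

lemma ncard_neighborSet_inter_le (hv : v ∈ X) :
    (G.neighborSet v ∩ X).ncard ≤ X.card - 1 := by
  rw [← Set.ncard_coe_finset, ← Set.ncard_sdiff_singleton_of_mem (Finset.mem_coe.mpr hv)]
  exact Set.ncard_le_ncard (neighborSet_inter_subset_sdiff v X)

lemma ncard_neighborSet_inter_le_of_not_adj (hv : v ∈ X) (hw : w ∈ X) (hvw : v ≠ w)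
    (hadj : ¬ G.Adj v w) : (G.neighborSet v ∩ X).ncard ≤ X.card - 2 := by
  have hsub : G.neighborSet v ∩ X ⊆ ((X : Set V) \ {v}) \ {w} := by
    rintro u ⟨hu, huX⟩
    exact ⟨⟨huX, fun h => G.irrefl (h ▸ hu)⟩, fun h => hadj (h ▸ hu)⟩
  refine (Set.ncard_le_ncard hsub).trans ?_
  rw [Set.ncard_sdiff_singleton_of_mem (show w ∈ (X : Set V) \ {v} from ⟨hw, hvw.symm⟩),
    Set.ncard_sdiff_singleton_of_mem (Finset.mem_coe.mpr hv), Set.ncard_coe_finset]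
  omega

lemma SimpleGraph.IsClique.ncard_neighborSet_inter (h : G.IsClique (X : Set V)) (hv : v ∈ X) :
    (G.neighborSet v ∩ X).ncard = X.card - 1 := by
  refine (ncard_neighborSet_inter_le hv).antisymm ?_
  rw [← Set.ncard_coe_finset, ← Set.ncard_sdiff_singleton_of_mem (Finset.mem_coe.mpr hv)]
  exact Set.ncard_le_ncard fun u ⟨hu, huv⟩ =>
    ⟨h (Finset.mem_coe.mpr hv) hu (Ne.symm huv), hu⟩

end Counting

lemma card_mul_add_two_le_sum {ι : Type*} [DecidableEq ι] {s : Finset ι} {f : ι → ℕ}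
    {g : ℕ} {v w : ι} (hf : ∀ u ∈ s, g ≤ f u) (hv : v ∈ s) (hw : w ∈ s) (hvw : v ≠ w)
    (hgv : g < f v) (hgw : g < f w) : s.card * g + 2 ≤ ∑ u ∈ s, f u := by
  have hw' : w ∈ s.erase v := Finset.mem_erase.mpr ⟨hvw.symm, hw⟩
  have hrest := Finset.card_nsmul_le_sum ((s.erase v).erase w) f g
    fun u hu => hf u (Finset.mem_of_mem_erase (Finset.mem_of_mem_erase hu))
  obtain ⟨m, hm⟩ := Nat.exists_eq_add_of_le (Finset.one_lt_card.mpr ⟨v, hv, w, hw, hvw⟩)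
  rw [Finset.card_erase_of_mem hw', Finset.card_erase_of_mem hv, smul_eq_mul, hm,
    show Nat.succ 1 + m - 1 - 1 = m by omega] at hrest
  rw [← Finset.add_sum_erase _ _ hv, ← Finset.add_sum_erase _ _ hw', hm]
  nlinarith

section RegularDOut

variable [Finite V] {k : ℕ} (hreg : ∀ v, degN G v = k)
include hreg

lemma dOut_eq_sum_sub (X : Finset V) :
    dOut G X = ∑ v ∈ X, (k - (G.neighborSet v ∩ X).ncard) := by
  simp only [dOut_eq_sum, ncard_neighborSet_sdiff, hreg]

theorem card_mul_le_dOut (X : Finset V) : X.card * (k + 1 - X.card) ≤ dOut G X := by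
  rw [dOut_eq_sum_sub hreg, ← smul_eq_mul]
  exact Finset.card_nsmul_le_sum _ _ _ fun v hv => by
    have := ncard_neighborSet_inter_le (G := G) hv
    have := Finset.card_pos.mpr ⟨v, hv⟩
    omega

theorem SimpleGraph.IsClique.dOut_eq {X : Finset V} (h : G.IsClique (X : Set V)) :
    dOut G X = X.card * (k + 1 - X.card) := by
  rw [dOut_eq_sum_sub hreg]
  exact Finset.sum_const_nat fun v hv => by
    have := h.ncard_neighborSet_inter hv
    have := Finset.card_pos.mpr ⟨v, hv⟩
    omega

theorem card_mul_add_two_le_dOut {X : Finset V} (h : ¬ G.IsClique (X : Set V))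
    (hXk : X.card ≤ k + 1) : X.card * (k + 1 - X.card) + 2 ≤ dOut G X := by
  classical
  obtain ⟨v, hv, w, hw, hvw, hadj⟩ : ∃ v ∈ X, ∃ w ∈ X, v ≠ w ∧ ¬ G.Adj v w := by
    simpa [IsClique, Set.Pairwise] using h
  have hv' := ncard_neighborSet_inter_le_of_not_adj hv hw hvw hadj
  have hw' := ncard_neighborSet_inter_le_of_not_adj hw hv hvw.symm fun h => hadj h.symm
  have hX2 := Finset.one_lt_card.mpr ⟨v, hv, w, hw, hvw⟩
  rw [dOut_eq_sum_sub hreg]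
  refine card_mul_add_two_le_sum (fun u hu => ?_) hv hw hvw (by omega) (by omega)
  have := ncard_neighborSet_inter_le (G := G) hu
  omega

end RegularDOut

section ExtraEdgeCut

variable {F : Set (Sym2 V)} {h : ℕ}

lemma mem_of_reachable_deleteEdges {X : Set V} (hF : edgeBoundary G X ⊆ F) {u w : V}
    (huw : (G.deleteEdges F).Reachable u w) (hu : u ∈ X) : w ∈ X := by
  obtain ⟨p⟩ := huw
  induction p with
  | nil => exact hu
  | cons hadj _ ih =>
    rw [deleteEdges_adj] at hadj
    exact ih <| by_contra fun hv =>
      hadj.2 (hF (mk_mem_edgeBoundary_iff.mpr ⟨hadj.1, Or.inl ⟨hu, hv⟩⟩))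

lemma edgeBoundary_supp_subset (c : (G.deleteEdges F).ConnectedComponent) :
    edgeBoundary G c.supp ⊆ F := by
  intro e he
  induction e using Sym2.ind with
  | _ u v =>
    obtain ⟨hadj, huv⟩ := mk_mem_edgeBoundary_iff.mp he
    by_contra hne
    have hsame := ConnectedComponent.connectedComponentMk_eq_of_adj
      (deleteEdges_adj.mpr ⟨hadj, hne⟩)
    simp only [ConnectedComponent.mem_supp_iff, hsame] at huv
    tauto

lemma connected_induce_supp_deleteEdges (c : (G.deleteEdges F).ConnectedComponent) :
    (G.induce c.supp).Connected :=
  c.maximal_connected_induce_supp.1.mono fun _ _ hadj => (deleteEdges_le F hadj)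

lemma one_lt_ncard_supp [Finite V] {H : SimpleGraph V} (hH : ∀ v, ∃ w, H.Adj v w)
    (c : H.ConnectedComponent) : 1 < c.supp.ncard := by
  induction c using ConnectedComponent.ind with
  | _ v =>
    obtain ⟨w, hw⟩ := hH v
    have hw' : w ∈ (H.connectedComponentMk v).supp :=
      (ConnectedComponent.connectedComponentMk_eq_of_adj hw).symm
    calc 1 < ({v, w} : Set V).ncard := by rw [Set.ncard_pair hw.ne]; norm_num
      _ ≤ (H.connectedComponentMk v).supp.ncard :=
        Set.ncard_le_ncard (Set.insert_subset rfl (Set.singleton_subset_iff.mpr hw'))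

lemma IsExtraEdgeCut.mono {h' : ℕ} (hF : IsExtraEdgeCut G h' F) (hh : h ≤ h') :
    IsExtraEdgeCut G h F :=
  ⟨hF.1, hF.2.1, fun c => hh.trans_lt (hF.2.2 c)⟩

lemma IsExtraEdgeCut.succ (hF : IsExtraEdgeCut G h F)
    (hc : ∀ c : (G.deleteEdges F).ConnectedComponent, c.supp.ncard ≠ h + 1) :
    IsExtraEdgeCut G (h + 1) F :=
  ⟨hF.1, hF.2.1, fun c => lt_of_le_of_ne (hF.2.2 c) (hc c).symm⟩

lemma LambdaConn.mono {h' : ℕ} (hl : LambdaConn G h') (hh : h ≤ h') : LambdaConn G h :=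
  let ⟨F, hF⟩ := hl; ⟨F, hF.mono hh⟩

lemma lambdaH_le_ncard (hF : IsExtraEdgeCut G h F) : lambdaH G h ≤ F.ncard :=
  Nat.sInf_le ⟨F, hF, rfl⟩

lemma LambdaConn.exists_ncard_eq_lambdaH (hl : LambdaConn G h) :
    ∃ F, IsExtraEdgeCut G h F ∧ F.ncard = lambdaH G h := by
  obtain ⟨F, hF⟩ := hl
  exact Nat.sInf_mem (s := {k | ∃ F, IsExtraEdgeCut G h F ∧ F.ncard = k})
    ⟨F.ncard, F, hF, rfl⟩

lemma xiH_le_dOut {X : Set V} (hX : X.ncard = h + 1) (hc : (G.induce X).Connected) :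
    xiH G h ≤ dOut G X :=
  Nat.sInf_le ⟨X, hX, hc, rfl⟩

lemma le_xiH [Finite V] {m : ℕ}
    (hne : ∃ X : Set V, X.ncard = h + 1 ∧ (G.induce X).Connected)
    (hle : ∀ X : Finset V, X.card = h + 1 → (G.induce (X : Set V)).Connected →
      m ≤ dOut G X) :
    m ≤ xiH G h := by
  obtain ⟨X, hX, hc⟩ := hne
  refine le_csInf ⟨_, X, hX, hc, rfl⟩ ?_
  rintro _ ⟨Y, hY, hYc, rfl⟩
  obtain ⟨s, rfl⟩ := (Set.toFinite Y).exists_finset_coe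
  exact hle s (by rwa [Set.ncard_coe_finset] at hY) hYc

theorem xiH_le_lambdaH [Finite V] (hl : LambdaConn G h) (hξ : xiH G h ≤ lambdaH G (h + 1)) :
    xiH G h ≤ lambdaH G h := by
  obtain ⟨F, hF, hcard⟩ := hl.exists_ncard_eq_lambdaH
  rw [← hcard]
  by_cases hc : ∃ c : (G.deleteEdges F).ConnectedComponent, c.supp.ncard = h + 1
  · obtain ⟨c, hc⟩ := hc
    calc xiH G h ≤ dOut G c.supp := xiH_le_dOut hc (connected_induce_supp_deleteEdges c)
      _ ≤ F.ncard := Set.ncard_le_ncard (edgeBoundary_supp_subset c) (Set.toFinite F)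
  · simp only [not_exists] at hc
    exact hξ.trans (lambdaH_le_ncard (hF.succ hc))

theorem superLambda_iff_lambdaH_lt (hconn : G.Connected) (hl : LambdaConn G (h + 1))
    (hopt : lambdaH G h = xiH G h) : SuperLambda G h ↔ lambdaH G h < lambdaH G (h + 1) := by
  constructor
  · rintro ⟨-, -, -, hsuper⟩
    by_contra! hle
    obtain ⟨F, hF, hcard⟩ := hl.exists_ncard_eq_lambdaH
    have hcard' : F.ncard = lambdaH G h :=
      le_antisymm (hcard ▸ hle) (lambdaH_le_ncard (hF.mono h.le_succ))
    obtain ⟨c, hc⟩ := hsuper F (hF.mono h.le_succ) hcard'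
    exact (hF.2.2 c).ne' hc
  · refine fun hlt => ⟨hconn, hl.mono h.le_succ, hopt, fun F hF hcard => ?_⟩
    by_contra! hc
    exact (lambdaH_le_ncard (hF.succ hc)).not_gt (hcard ▸ hlt)

end ExtraEdgeCut

lemma exists_adj_notMem_of_ncard_lt [Finite V] {X : Set V} {v : V}
    (h : (X \ {v}).ncard < degN G v) : ∃ w, G.Adj v w ∧ w ∉ X := by
  by_contra! hall
  have hsub : G.neighborSet v ⊆ X \ {v} := fun w hw =>
    ⟨hall w hw, fun hwv => G.irrefl ((Set.mem_singleton_iff.mp hwv) ▸ hw)⟩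
  exact (Set.ncard_le_ncard hsub).not_gt h

theorem isExtraEdgeCut_edgeBoundary_pair [Finite V] (hdeg : ∀ v, 3 ≤ degN G v) {x y : V}
    (hxy : G.Adj x y) : IsExtraEdgeCut G 1 (edgeBoundary G {x, y}) := by
  have hout : ∀ v, ∃ w, G.Adj v w ∧ w ∉ ({x, y} : Set V) := fun v => by
    refine exists_adj_notMem_of_ncard_lt (lt_of_lt_of_le ?_ (hdeg v))
    calc (({x, y} : Set V) \ {v}).ncard ≤ ({x, y} : Set V).ncard :=
          Set.ncard_le_ncard Set.sdiff_subset
      _ ≤ ({y} : Set V).ncard + 1 := Set.ncard_insert_le x {y}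
      _ < 3 := by rw [Set.ncard_singleton]; norm_num
  refine ⟨fun _ he => he.1, fun hc => ?_, one_lt_ncard_supp fun v => ?_⟩
  · obtain ⟨z, -, hz⟩ := hout x
    exact hz (mem_of_reachable_deleteEdges subset_rfl (hc.preconnected x z) (by simp))
  · by_cases hv : v ∈ ({x, y} : Set V)
    · rcases hv with rfl | rfl
      · exact ⟨y, deleteEdges_adj.mpr ⟨hxy, by simp [mk_mem_edgeBoundary_iff]⟩⟩
      · exact ⟨x, deleteEdges_adj.mpr ⟨hxy.symm, by simp [mk_mem_edgeBoundary_iff]⟩⟩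
    · obtain ⟨w, hw, hwX⟩ := hout v
      exact ⟨w, deleteEdges_adj.mpr ⟨hw, fun hF => by simp_all [mk_mem_edgeBoundary_iff]⟩⟩

section RegularXi

variable [Finite V] {k h : ℕ} (hreg : ∀ v, degN G v = k)
include hreg

theorem SimpleGraph.IsNClique.dOut_eq {n : ℕ} {s : Finset V} (hs : G.IsNClique n s) :
    dOut G s = n * (k + 1 - n) :=
  hs.card_eq ▸ hs.isClique.dOut_eq hreg

theorem xiH_le_of_isNClique {s : Finset V} (hs : G.IsNClique (h + 1) s) :
    xiH G h ≤ (h + 1) * (k - h) := by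
  have hconn : (G.induce (s : Set V)).Connected := by
    obtain ⟨a, ha⟩ := Finset.card_pos.mp (by rw [hs.card_eq]; omega)
    have : Nonempty (s : Set V) := ⟨⟨a, ha⟩⟩
    rw [induce_eq_top.mpr hs.isClique]
    exact connected_top
  calc xiH G h ≤ dOut G s := xiH_le_dOut (by rw [Set.ncard_coe_finset, hs.card_eq]) hconn
    _ = (h + 1) * (k - h) := by rw [hs.dOut_eq hreg]; congr 1; omega

theorem mul_le_xiH (hne : ∃ X : Set V, X.ncard = h + 1 ∧ (G.induce X).Connected) :
    (h + 1) * (k - h) ≤ xiH G h :=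
  le_xiH hne fun X hX _ => by
    have := card_mul_le_dOut hreg X
    rwa [hX, Nat.add_sub_add_right] at this

theorem mul_add_two_le_xiH (hne : ∃ X : Set V, X.ncard = h + 1 ∧ (G.induce X).Connected)
    (hfree : G.CliqueFree (h + 1)) (hhk : h ≤ k) : (h + 1) * (k - h) + 2 ≤ xiH G h :=
  le_xiH hne fun X hX _ => by
    have := card_mul_add_two_le_dOut hreg (fun hc => hfree X ⟨hc, hX⟩) (by omega)
    rwa [hX, Nat.add_sub_add_right] at this

end RegularXi

lemma four_le_egirth_iff : 4 ≤ G.egirth ↔ G.CliqueFree 3 := by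
  constructor
  · intro h s hs
    obtain ⟨u, w, hw, hlen⟩ := is3Clique_iff_exists_cycle_length_three.mp ⟨s, hs⟩
    have := le_egirth.mp h u w hw
    rw [hlen] at this
    norm_num at this
  · refine fun h => le_egirth.mpr fun u w hw => ?_
    by_contra! hlt
    have h3 := hw.three_le_length
    have hlen : w.length = 3 := by norm_cast at hlt; omega
    obtain ⟨s, hs⟩ := is3Clique_iff_exists_cycle_length_three.mpr ⟨u, w, hw, hlen⟩
    exact h s hs

lemma exists_connected_ncard_three [Finite V] {v : V} (hv : 2 ≤ degN G v) :
    ∃ X : Set V, X.ncard = 3 ∧ (G.induce X).Connected := by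
  obtain ⟨u, w, hu, hw, huw⟩ :=
    (Set.one_lt_ncard_iff (Set.toFinite _)).mp (hv : 1 < (G.neighborSet v).ncard)
  have hX : ({v, u} ∪ {v, w} : Set V) = {v, u, w} := by
    ext; simp only [Set.mem_union, Set.mem_insert_iff, Set.mem_singleton_iff]; tauto
  refine ⟨{v, u} ∪ {v, w}, ?_, induce_union_connected
    (induce_pair_connected_of_adj hu).preconnected
    (induce_pair_connected_of_adj hw).preconnected ⟨v, by simp⟩⟩
  rw [hX]
  exact Set.ncard_eq_three.mpr ⟨v, u, w, G.ne_of_adj hu, G.ne_of_adj hw, huw, rfl⟩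

end ExtraConnectivity

/-- A `k`-regular `λ''`-optimal graph with `k ≥ 4` is super-`λ'` iff its girth is at
least `4` or `k ≥ 5`. -/
theorem stmt10 {V : Type*} [Fintype V] (G : SimpleGraph V) (k : ℕ) (hk : 4 ≤ k)
    (hconn : G.Connected) (hreg : ∀ v, degN G v = k)
    (hl2 : LambdaConn G 2) (hopt : lambdaH G 2 = xiH G 2) :
    SuperLambda G 1 ↔ ((4 : ℕ∞) ≤ G.egirth ∨ 5 ≤ k) := by
  classical
  have hdeg : ∀ v, 3 ≤ degN G v := fun v => by rw [hreg]; omega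
  obtain ⟨x⟩ := hconn.nonempty
  obtain ⟨y, hxy⟩ : (G.neighborSet x).Nonempty :=
    Set.nonempty_of_ncard_ne_zero (by have : 3 ≤ (G.neighborSet x).ncard := hdeg x; omega)
  have hedge : G.IsNClique 2 {x, y} :=
    ⟨by simpa using isClique_pair.mpr fun _ => hxy, Finset.card_pair hxy.ne⟩
  have hpair : ∃ X : Set V, X.ncard = 1 + 1 ∧ (G.induce X).Connected :=
    ⟨{x, y}, Set.ncard_pair hxy.ne, induce_pair_connected_of_adj hxy⟩
  have htriple := exists_connected_ncard_three ((by omega : 2 ≤ 3).trans (hdeg x))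
  have hxi₁ : xiH G 1 = 2 * (k - 1) :=
    le_antisymm (xiH_le_of_isNClique hreg hedge) (mul_le_xiH hreg hpair)
  have hxi₂ : 3 * (k - 2) ≤ xiH G 2 := mul_le_xiH hreg htriple
  have hlam₁ : lambdaH G 1 = xiH G 1 := by
    have hcut := isExtraEdgeCut_edgeBoundary_pair hdeg hxy
    refine le_antisymm ?_
      (xiH_le_lambdaH ⟨_, hcut⟩ (by rw [show 1 + 1 = 2 from rfl, hopt]; omega))
    calc lambdaH G 1 ≤ dOut G ({x, y} : Finset V) := by
          rw [Finset.coe_pair]; exact lambdaH_le_ncard hcut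
      _ = xiH G 1 := by rw [hedge.dOut_eq hreg, hxi₁]; omega
  rw [superLambda_iff_lambdaH_lt hconn hl2 hlam₁, hopt, hlam₁, hxi₁, four_le_egirth_iff]
  by_cases hfree : G.CliqueFree 3
  · have := mul_add_two_le_xiH hreg htriple hfree (by omega)
    simp only [hfree, true_or, iff_true]
    omega
  · obtain ⟨s, hs⟩ : ∃ s, G.IsNClique 3 s := by simpa [CliqueFree] using hfree
    have := xiH_le_of_isNClique hreg hs
    simp only [hfree, false_or]
    omega
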